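/- arXiv:2006.10418 — 2 statements merged into one kernel-verified Lean document; each statement's English description precedes it below -/
import Mathlib

section
/- Let char F = p, K/F a purely inseparable field extension of exponent one, δ an algebraic derivation of K with Const(δ) = F and minimum polynomial g(t) = t^{p^e} + c₁ t^{p^{e−1}} + ⋯ + c_e t ∈ F[t]. Then the center of the differential polynomial ring R = K[t;δ] equals F[g(t)], i.e. {Σ a_i g(t)^i : a_i ∈ F}. -/
/-!
A central `z` commutes with `t`, which forces its coefficients to be constants, so `z = f(t)` with
`f ∈ F[X]`; comparing constant coefficients in `z a = a z` gives `(f - f(0))(δ) = 0`. Because the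
constants of `δ` are `F`, a linear differential equation of order `d` has at most `d` solutions
in `K` independent over `F`, so no nonzero polynomial of degree `< [K:F] = p^e` kills `δ`: `g` is
the minimal polynomial of `δ` and `f = f(0) + g q`. In characteristic `p`,
`t^{p^m} a = a t^{p^m} + δ^{p^m}(a)`, so `g(t)` is central; as `g(t)` is not a zero divisor,
`q(t)` is central as well, and induction on the degree gives `f ∈ F[g]`.
-/

open Polynomial Module

theorem Module.End.charP_int (R : Type*) [Ring R] (p : ℕ) [CharP R p] :
    CharP (Module.End ℤ R) p where
  cast_eq_zero_iff n := by
    rw [← CharP.cast_eq_zero_iff R p]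
    refine ⟨fun h => by simpa using LinearMap.congr_fun h 1, fun h => ?_⟩
    ext x
    simp [h]

theorem Subring.mem_center_of_mul_mem_center {R : Type*} [Ring R] {x y : R}
    (hx : x ∈ Subring.center R) (hreg : ∀ w, w * x = 0 → w = 0)
    (hxy : x * y ∈ Subring.center R) : y ∈ Subring.center R := by
  rw [Subring.mem_center_iff] at hx hxy ⊢
  refine fun g => sub_eq_zero.1 (hreg _ ?_)
  rw [sub_mul, mul_assoc y, hx g, ← mul_assoc, hx y, ← hxy g, ← hx y, ← mul_assoc, sub_self]

theorem Polynomial.exists_eq_comp_of_forall_dvd_sub_C {F : Type*} [CommRing F] [IsDomain F]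
    {g : F[X]} (hg : 0 < g.natDegree) {S : Subring F[X]} (hC : ∀ a, C a ∈ S)
    (hdvd : ∀ f ∈ S, g ∣ f - C (f.coeff 0)) (hcancel : ∀ q, g * q ∈ S → q ∈ S)
    {f : F[X]} (hf : f ∈ S) : ∃ q : F[X], f = q.comp g := by
  induction hn : f.natDegree using Nat.strong_induction_on generalizing f with
  | _ n ih =>
  obtain ⟨q, hq⟩ := hdvd f hf
  by_cases hq0 : q = 0
  · exact ⟨C (f.coeff 0), by rw [C_comp, ← sub_eq_zero, hq, hq0, mul_zero]⟩
  have hqS : q ∈ S := hcancel q (hq ▸ S.sub_mem hf (hC _))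
  have hlt : q.natDegree < n := by
    have := congrArg natDegree hq
    rw [natDegree_sub_C, natDegree_mul (by rintro rfl; simp at hg) hq0] at this
    omega
  obtain ⟨q', rfl⟩ := ih _ hlt hqS rfl
  exact ⟨X * q' + C (f.coeff 0), by rw [add_comp, mul_comp, X_comp, C_comp, ← hq]; ring⟩

theorem Polynomial.degree_sum_C_mul_X_pow_pow_lt {F : Type*} [Semiring F] {p : ℕ} (hp : 1 < p)
    (e : ℕ) (c : ℕ → F) :
    (∑ i ∈ Finset.range e, C (c i) * X ^ p ^ (e - 1 - i)).degree
      < ((p ^ e : ℕ) : WithBot ℕ) := by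
  refine (degree_sum_le _ _).trans_lt <| (Finset.sup_lt_iff (WithBot.bot_lt_coe _)).2
    fun i hi => (degree_C_mul_X_pow_le _ _).trans_lt ?_
  exact_mod_cast Nat.pow_lt_pow_right hp (by rw [Finset.mem_range] at hi; omega)

theorem Derivation.exists_ne_zero_forall_map_eq_zero {A K ι : Type*} [CommRing A] [Field K]
    [Algebra A K] [Fintype ι] (D : Derivation A K K) {W : Submodule K (ι → K)}
    (hW : ∀ c ∈ W, (fun j => D (c j)) ∈ W) (hne : W ≠ ⊥) :
    ∃ c ∈ W, c ≠ 0 ∧ ∀ j, D (c j) = 0 := by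
  classical
  obtain ⟨c, hcW, hc0⟩ := Submodule.exists_mem_ne_zero_of_ne_bot hne
  induction hn : (Finset.univ.filter fun j => c j ≠ 0).card using Nat.strong_induction_on
    generalizing c with
  | _ n ih =>
  obtain ⟨j₀, hj₀⟩ : ∃ j, c j ≠ 0 := Function.ne_iff.1 hc0
  set c' := (c j₀)⁻¹ • c
  have hc'j₀ : c' j₀ = 1 := inv_mul_cancel₀ hj₀
  by_cases hDc : (fun j => D (c' j)) = 0
  · exact ⟨c', W.smul_mem _ hcW, fun h => by simpa [hc'j₀] using congrFun h j₀,
      fun j => congrFun hDc j⟩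
  -- normalising `c j₀` to `1` makes `D c'` vanish at `j₀`, so its support is smaller
  refine ih _ ?_ _ (hW _ (W.smul_mem _ hcW)) hDc rfl
  rw [← hn]
  have hDc'j₀ : D (c' j₀) = 0 := by rw [hc'j₀, D.map_one_eq_zero]
  refine Finset.card_lt_card ((Finset.ssubset_iff_of_subset ?_).2
    ⟨j₀, by simp [hj₀], fun h => (Finset.mem_filter.1 h).2 hDc'j₀⟩)
  intro j
  simp only [Finset.mem_filter, Finset.mem_univ, true_and]
  intro h hcj
  simp [hcj] at h

theorem Derivation.isSolution_iterate {F K : Type*} [CommRing F] [CommRing K] [Algebra F K]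
    (D : Derivation F K K) {r : F[X]} (hr : r.Monic)
    (hrD : aeval (D : Module.End F K) r = 0) (x : K) :
    (LinearRecurrence.mk r.natDegree fun i => -algebraMap F K (r.coeff i)).IsSolution
      fun i => (⇑D)^[i] x := by
  intro i
  have h := congrArg (· ((⇑D)^[i] x)) hrD
  simp only [aeval_eq_sum_range, Finset.sum_range_succ, hr.coeff_natDegree, LinearMap.add_apply,
    LinearMap.sum_apply, Module.End.mul_apply, Module.algebraMap_end_apply, Module.End.pow_apply,
    Derivation.coeFn_coe, ← Function.iterate_add_apply, Algebra.smul_def, map_one, one_mul,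
    LinearMap.zero_apply] at h
  simp only [neg_mul, Finset.sum_neg_distrib, eq_neg_iff_add_eq_zero, add_comm i]
  rwa [add_comm, Fin.sum_univ_eq_sum_range (fun k => algebraMap F K (r.coeff k) * (⇑D)^[k + i] x)]

theorem Derivation.finrank_le_natDegree_of_aeval_eq_zero {F K : Type*} [Field F] [Field K]
    [Algebra F K] (D : Derivation F K K) (hker : ∀ x, D x = 0 → x ∈ (algebraMap F K).range)
    {r : F[X]} (hr : r.Monic) (hrD : aeval (D : Module.End F K) r = 0) :
    finrank F K ≤ r.natDegree := by
  classical
  by_contra! hlt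
  have : FiniteDimensional F K := .of_finrank_pos (by omega)
  let b := Module.finBasis F K
  let E : LinearRecurrence K := ⟨r.natDegree, fun i => -algebraMap F K (r.coeff i)⟩
  let Φ : (Fin (finrank F K) → K) →ₗ[K] E.solSpace :=
    Fintype.linearCombination K fun j =>
      ⟨_, (E.is_sol_iff_mem_solSpace _).1 (D.isSolution_iterate hr hrD (b j))⟩
  have mem_ker : ∀ c, c ∈ LinearMap.ker Φ ↔ ∀ i, ∑ j, c j * (⇑D)^[i] (b j) = 0 := by
    intro c
    simp [Φ, Fintype.linearCombination_apply, Subtype.ext_iff, funext_iff, Finset.sum_apply]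
  have hstable : ∀ c ∈ LinearMap.ker Φ, (fun j => D (c j)) ∈ LinearMap.ker Φ := by
    intro c hc
    rw [mem_ker] at hc ⊢
    intro i
    have h := congrArg D (hc i)
    simp only [map_sum, Derivation.leibniz, smul_eq_mul, map_zero, Finset.sum_add_distrib,
      ← Function.iterate_succ_apply' (⇑D), hc (i + 1), zero_add] at h
    simpa only [mul_comm] using h
  have : FiniteDimensional K E.solSpace := .of_basis E.basis
  -- `finrank F K > d` derivative sequences live in the `d`-dimensional space of solutions
  have hne : LinearMap.ker Φ ≠ ⊥ := LinearMap.ker_ne_bot_of_finrank_lt <| by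
    rwa [E.toInit.finrank_eq, Module.finrank_fin_fun, Module.finrank_fin_fun]
  obtain ⟨c, hc, hc0, hcD⟩ := D.exists_ne_zero_forall_map_eq_zero hstable hne
  choose a ha using fun j => hker _ (hcD j)
  have hrel : ∑ j, a j • b j = 0 := by
    simpa [Algebra.smul_def, ha] using (mem_ker c).1 hc 0
  have ha0 := Fintype.linearIndependent_iff.1 b.linearIndependent a hrel
  exact hc0 (funext fun j => by rw [← ha, ha0, map_zero, Pi.zero_apply])

theorem Derivation.minpoly_eq_of_natDegree_le {F K : Type*} [Field F] [Field K] [Algebra F K]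
    (D : Derivation F K K) (hker : ∀ x, D x = 0 → x ∈ (algebraMap F K).range) {g : F[X]}
    (hg : g.Monic) (hgD : aeval (D : Module.End F K) g = 0) (hdeg : g.natDegree ≤ finrank F K) :
    minpoly F (D : Module.End F K) = g := by
  refine (minpoly.unique _ _ hg hgD fun q hq hqD => ?_).symm
  rw [degree_eq_natDegree hg.ne_zero, degree_eq_natDegree hq.ne_zero]
  exact_mod_cast hdeg.trans (D.finrank_le_natDegree_of_aeval_eq_zero hker hq hqD)

structure IsDifferentialPolynomialRing {K R : Type*} [CommRing K] [Ring R] (δ : K → K)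
    (ι : K →+* R) (t : R) (coeff : R →+ (ℕ →₀ K)) : Prop where
  t_mul : ∀ a, t * ι a = ι a * t + ι (δ a)
  coeff_mul_pow : ∀ a i, coeff (ι a * t ^ i) = Finsupp.single i a
  sum_coeff : ∀ x, (coeff x).sum (fun i a => ι a * t ^ i) = x

namespace IsDifferentialPolynomialRing

noncomputable def toPolynomial {K R : Type*} [CommRing K] [AddCommMonoid R]
    (coeff : R →+ (ℕ →₀ K)) : R →+ K[X] :=
  (toFinsuppIso K).symm.toAddMonoidHom.comp
    (AddMonoidAlgebra.coeffAddEquiv.symm.toAddMonoidHom.comp coeff)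

theorem coeff_toPolynomial {K R : Type*} [CommRing K] [AddCommMonoid R]
    (coeff : R →+ (ℕ →₀ K)) (y : R) (n : ℕ) :
    (toPolynomial coeff y).coeff n = coeff y n :=
  rfl

variable {K R : Type*} [CommRing K] [Ring R] {δ : K → K} {ι : K →+* R} {t : R}
  {coeff : R →+ (ℕ →₀ K)}

theorem addMonoidHom_ext (h : IsDifferentialPolynomialRing δ ι t coeff) {M : Type*}
    [AddCommMonoid M] {φ ψ : R →+ M} (hφψ : ∀ a i, φ (ι a * t ^ i) = ψ (ι a * t ^ i)) :
    φ = ψ := by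
  ext x
  rw [← h.sum_coeff x, map_finsuppSum, map_finsuppSum]
  simp only [hφψ]

theorem coeff_sum (h : IsDifferentialPolynomialRing δ ι t coeff) (f : ℕ →₀ K) :
    coeff (f.sum fun i a => ι a * t ^ i) = f := by
  simp [map_finsuppSum, h.coeff_mul_pow]

theorem ι_injective (h : IsDifferentialPolynomialRing δ ι t coeff) : Function.Injective ι :=
  (injective_iff_map_eq_zero ι).2 fun a ha => by simpa [ha] using (h.coeff_mul_pow a 0).symm

theorem apply_zero (h : IsDifferentialPolynomialRing δ ι t coeff) : δ 0 = 0 :=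
  h.ι_injective <| by simpa using (h.t_mul 0).symm

theorem mem_center_of_commute (h : IsDifferentialPolynomialRing δ ι t coeff) {z : R}
    (hι : ∀ b, Commute z (ι b)) (ht : Commute z t) : z ∈ Subring.center R := by
  refine Subring.mem_center_iff.2 fun x => ?_
  rw [← h.sum_coeff x, Finsupp.sum_mul, Finsupp.mul_sum]
  exact Finsupp.sum_congr fun i _ => ((hι _).mul_right (ht.pow_right i)).eq.symm

theorem ι_mem_center (h : IsDifferentialPolynomialRing δ ι t coeff) {a : K} (ha : δ a = 0) :
    ι a ∈ Subring.center R :=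
  h.mem_center_of_commute (fun b => by simp only [Commute, SemiconjBy, ← map_mul, mul_comm])
    (by simp [Commute, SemiconjBy, h.t_mul, ha])

theorem commute_ι_t (h : IsDifferentialPolynomialRing δ ι t coeff) {a : K} (ha : δ a = 0) :
    Commute (ι a) t :=
  (Subring.mem_center_iff.1 (h.ι_mem_center ha) t).symm

theorem t_mul_sub_mul_t (h : IsDifferentialPolynomialRing δ ι t coeff) (z : R) :
    t * z - z * t = (coeff z).sum fun i a => ι (δ a) * t ^ i := by
  conv_lhs => rw [← h.sum_coeff z]
  rw [Finsupp.mul_sum, Finsupp.sum_mul, ← Finsupp.sum_sub]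
  refine Finsupp.sum_congr fun i _ => ?_
  rw [← mul_assoc, h.t_mul, add_mul, mul_assoc, mul_assoc, ← pow_succ, ← pow_succ']
  abel

theorem map_coeff_eq_zero_of_commute (h : IsDifferentialPolynomialRing δ ι t coeff) {z : R}
    (hz : Commute z t) (i : ℕ) : δ (coeff z i) = 0 := by
  have : (coeff z).mapRange δ h.apply_zero = 0 := by
    rw [← h.coeff_sum (Finsupp.mapRange _ _ _), Finsupp.sum_mapRange_index (by simp),
      ← h.t_mul_sub_mul_t, hz.eq, sub_self, map_zero]
  simpa using DFunLike.congr_fun this i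

theorem pow_char_pow_mul (h : IsDifferentialPolynomialRing δ ι t coeff) (p : ℕ) [Fact p.Prime]
    [CharP K p] (m : ℕ) (b : K) : t ^ p ^ m * ι b = ι b * t ^ p ^ m + ι (δ^[p ^ m] b) := by
  have : CharP R p := charP_of_injective_ringHom h.ι_injective p
  have : CharP (Module.End ℤ R) p := Module.End.charP_int R p
  -- `ad t` acts on `ι K` as `δ`, and in characteristic `p` we have `(ad t) ^ p = ad (t ^ p)`
  let ad := LinearMap.mulLeft ℤ t - LinearMap.mulRight ℤ t
  have had : ∀ n b, (ad ^ n) (ι b) = ι (δ^[n] b) := by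
    intro n
    induction n with
    | zero => simp
    | succ n ih =>
      intro b
      rw [pow_succ', Module.End.mul_apply, ih, Function.iterate_succ_apply']
      simp [ad, h.t_mul]
  have := had (p ^ m) b
  rw [sub_pow_char_pow_of_commute p m (LinearMap.commute_mulLeft_right t t),
    LinearMap.pow_mulLeft, LinearMap.pow_mulRight] at this
  simp only [LinearMap.sub_apply, LinearMap.mulLeft_apply, LinearMap.mulRight_apply] at this
  rw [← this]
  abel

theorem sum_mul_ι (h : IsDifferentialPolynomialRing δ ι t coeff) (p : ℕ) [Fact p.Prime]
    [CharP K p] {α : Type*} (s : Finset α) (a : α → K) (m : α → ℕ) (b : K) :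
    (∑ i ∈ s, ι (a i) * t ^ p ^ m i) * ι b
      = ι b * ∑ i ∈ s, ι (a i) * t ^ p ^ m i + ι (∑ i ∈ s, a i * δ^[p ^ m i] b) := by
  rw [Finset.sum_mul, Finset.mul_sum, map_sum, ← Finset.sum_add_distrib]
  refine Finset.sum_congr rfl fun i _ => ?_
  rw [mul_assoc, h.pow_char_pow_mul p, mul_add, ← mul_assoc, ← mul_assoc, ← map_mul,
    ← map_mul, ← map_mul, mul_comm (a i) b]

theorem toPolynomial_mul_pow (h : IsDifferentialPolynomialRing δ ι t coeff) (a : K) (i : ℕ) :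
    toPolynomial coeff (ι a * t ^ i) = monomial i a := by
  ext n
  simp [coeff_toPolynomial, h.coeff_mul_pow, coeff_monomial, Finsupp.single_apply]

theorem toPolynomial_ι (h : IsDifferentialPolynomialRing δ ι t coeff) (a : K) :
    toPolynomial coeff (ι a) = C a := by
  simpa only [pow_zero, mul_one, monomial_zero_left] using h.toPolynomial_mul_pow a 0

theorem toPolynomial_injective (h : IsDifferentialPolynomialRing δ ι t coeff) :
    Function.Injective (toPolynomial coeff) := by
  intro x y hxy
  rw [← h.sum_coeff x, ← h.sum_coeff y]
  congr 1
  ext n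
  rw [← coeff_toPolynomial, hxy, coeff_toPolynomial]

theorem toPolynomial_ι_mul (h : IsDifferentialPolynomialRing δ ι t coeff) (b : K) (y : R) :
    toPolynomial coeff (ι b * y) = C b * toPolynomial coeff y :=
  DFunLike.congr_fun (h.addMonoidHom_ext
    (φ := (toPolynomial coeff).comp (AddMonoidHom.mulLeft (ι b)))
    (ψ := (AddMonoidHom.mulLeft (C b)).comp (toPolynomial coeff)) fun a i => by
      simp [← mul_assoc, ← map_mul, h.toPolynomial_mul_pow, C_mul_monomial]) y

theorem toPolynomial_mul_t (h : IsDifferentialPolynomialRing δ ι t coeff) (y : R) :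
    toPolynomial coeff (y * t) = toPolynomial coeff y * X :=
  DFunLike.congr_fun (h.addMonoidHom_ext
    (φ := (toPolynomial coeff).comp (AddMonoidHom.mulRight t))
    (ψ := (AddMonoidHom.mulRight X).comp (toPolynomial coeff)) fun a i => by
      simp [mul_assoc, ← pow_succ, h.toPolynomial_mul_pow, monomial_mul_X]) y

theorem toPolynomial_mul_t_pow (h : IsDifferentialPolynomialRing δ ι t coeff) (y : R) (n : ℕ) :
    toPolynomial coeff (y * t ^ n) = toPolynomial coeff y * X ^ n := by
  induction n with
  | zero => simp
  | succ n ih => rw [pow_succ, ← mul_assoc, h.toPolynomial_mul_t, ih, pow_succ, mul_assoc]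

theorem toPolynomial_mul_ι (h : IsDifferentialPolynomialRing δ ι t coeff) {c : K} (hc : δ c = 0)
    (y : R) : toPolynomial coeff (y * ι c) = toPolynomial coeff y * C c :=
  DFunLike.congr_fun (h.addMonoidHom_ext
    (φ := (toPolynomial coeff).comp (AddMonoidHom.mulRight (ι c)))
    (ψ := (AddMonoidHom.mulRight (C c)).comp (toPolynomial coeff)) fun a i => by
      simp only [AddMonoidHom.comp_apply, AddMonoidHom.coe_mulRight]
      rw [mul_assoc, Subring.mem_center_iff.1 (h.ι_mem_center hc), ← mul_assoc, ← map_mul,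
        h.toPolynomial_mul_pow, h.toPolynomial_mul_pow, monomial_mul_C]) y

theorem exists_pow_mul_eq (h : IsDifferentialPolynomialRing δ ι t coeff) (n : ℕ) (b : K) :
    ∃ y, t ^ n * ι b = ι (δ^[n] b) + y * t := by
  induction n with
  | zero => exact ⟨0, by simp⟩
  | succ n ih =>
    obtain ⟨y, hy⟩ := ih
    refine ⟨ι (δ^[n] b) + t * y, ?_⟩
    rw [pow_succ', mul_assoc, hy, mul_add, h.t_mul, Function.iterate_succ_apply', add_mul,
      mul_assoc]
    abel

section Constants

variable {F : Type*} [CommRing F] [Algebra F K]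

theorem exists_eval₂_eq_of_mem_center (h : IsDifferentialPolynomialRing δ ι t coeff)
    (hker : ∀ x, δ x = 0 → x ∈ (algebraMap F K).range) {z : R}
    (hz : z ∈ Subring.center R) : ∃ f : F[X], eval₂ (ι.comp (algebraMap F K)) t f = z := by
  choose a ha using fun i =>
    hker _ (h.map_coeff_eq_zero_of_commute (Subring.mem_center_iff.1 hz t).symm i)
  refine ⟨∑ i ∈ (coeff z).support, monomial i (a i), ?_⟩
  conv_rhs => rw [← h.sum_coeff z]
  simp [eval₂_finsetSum, eval₂_monomial, ha, Finsupp.sum]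

theorem toPolynomial_mul_eval₂ (h : IsDifferentialPolynomialRing δ ι t coeff)
    (hF : ∀ a : F, δ (algebraMap F K a) = 0) (y : R) (f : F[X]) :
    toPolynomial coeff (y * eval₂ (ι.comp (algebraMap F K)) t f)
      = toPolynomial coeff y * f.map (algebraMap F K) := by
  induction f using Polynomial.induction_on' with
  | add f g hf hg => rw [eval₂_add, mul_add, map_add, hf, hg, Polynomial.map_add, mul_add]
  | monomial n a =>
    rw [eval₂_monomial, ← mul_assoc, h.toPolynomial_mul_t_pow, RingHom.comp_apply,
      h.toPolynomial_mul_ι (hF a), map_monomial, ← C_mul_X_pow_eq_monomial, mul_assoc]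

theorem toPolynomial_eval₂ (h : IsDifferentialPolynomialRing δ ι t coeff)
    (hF : ∀ a : F, δ (algebraMap F K a) = 0) (f : F[X]) :
    toPolynomial coeff (eval₂ (ι.comp (algebraMap F K)) t f) = f.map (algebraMap F K) := by
  have h1 : toPolynomial coeff 1 = 1 := by simpa using h.toPolynomial_ι 1
  simpa [h1] using h.toPolynomial_mul_eval₂ hF 1 f

theorem exists_eval₂_mul_eq {D : Derivation F K K} (h : IsDifferentialPolynomialRing D ι t coeff)
    (f : F[X]) (b : K) :
    ∃ y, eval₂ (ι.comp (algebraMap F K)) t f * ι b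
      = ι (aeval (D : Module.End F K) f b) + y * t := by
  induction f using Polynomial.induction_on' with
  | add f g hf hg =>
    obtain ⟨y₁, h₁⟩ := hf
    obtain ⟨y₂, h₂⟩ := hg
    refine ⟨y₁ + y₂, ?_⟩
    rw [eval₂_add, add_mul, h₁, h₂, map_add, LinearMap.add_apply, map_add]
    noncomm_ring
  | monomial n a =>
    obtain ⟨y, hy⟩ := h.exists_pow_mul_eq n b
    refine ⟨ι (algebraMap F K a) * y, ?_⟩
    rw [eval₂_monomial, RingHom.comp_apply, mul_assoc, hy, mul_add, ← map_mul, ← mul_assoc]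
    simp [aeval_monomial, Module.End.pow_apply, Algebra.smul_def]

theorem aeval_sub_C_coeff_zero_eq_zero_of_mem_center {D : Derivation F K K}
    (h : IsDifferentialPolynomialRing D ι t coeff) {f : F[X]}
    (hf : eval₂ (ι.comp (algebraMap F K)) t f ∈ Subring.center R) :
    aeval (D : Module.End F K) (f - C (f.coeff 0)) = 0 := by
  ext b
  obtain ⟨y, hy⟩ := h.exists_eval₂_mul_eq f b
  -- compare the constant coefficients of the two sides of `ι b * f(t) = f(t) * ι b`
  have := congrArg (fun w => (toPolynomial coeff w).coeff 0) (Subring.mem_center_iff.1 hf (ι b))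
  simp [hy, h.toPolynomial_ι_mul, h.toPolynomial_eval₂ D.map_algebraMap, h.toPolynomial_mul_t,
    h.toPolynomial_ι] at this
  simp [this, Algebra.smul_def, mul_comm]

end Constants

theorem eq_zero_of_mul_eval₂_eq_zero {F : Type*} [Field F] [Algebra F K] [IsDomain K]
    (h : IsDifferentialPolynomialRing δ ι t coeff) (hF : ∀ a : F, δ (algebraMap F K a) = 0)
    {f : F[X]} (hf : f ≠ 0) {y : R} (hy : y * eval₂ (ι.comp (algebraMap F K)) t f = 0) :
    y = 0 := by
  have := h.toPolynomial_mul_eval₂ hF y f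
  rw [hy, map_zero, eq_comm, mul_eq_zero, or_iff_left (map_ne_zero hf)] at this
  exact h.toPolynomial_injective (this.trans (map_zero _).symm)

theorem pow_add_sum_mem_center (h : IsDifferentialPolynomialRing δ ι t coeff) (p : ℕ)
    [Fact p.Prime] [CharP K p] (n : ℕ) {α : Type*} (s : Finset α) {a : α → K}
    (ha : ∀ i, δ (a i) = 0) (m : α → ℕ)
    (hδ : ∀ b, δ^[p ^ n] b + ∑ i ∈ s, a i * δ^[p ^ m i] b = 0) :
    t ^ p ^ n + ∑ i ∈ s, ι (a i) * t ^ p ^ m i ∈ Subring.center R := by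
  refine h.mem_center_of_commute (fun b => ?_) ?_
  · change _ * ι b = ι b * _
    rw [add_mul, h.pow_char_pow_mul p, h.sum_mul_ι p, mul_add, add_add_add_comm, ← map_add, hδ,
      map_zero, add_zero]
  · refine ((Commute.refl t).pow_left _).add_left (Commute.sum_left _ _ _ fun i _ => ?_)
    exact (h.commute_ι_t (ha i)).mul_left ((Commute.refl t).pow_left _)

end IsDifferentialPolynomialRing

theorem IsDifferentialPolynomialRing.mem_center_iff_exists_eval₂ {F K R : Type*} [Field F]
    [Field K] [Algebra F K] [Ring R] {ι : K →+* R} {t : R} {coeff : R →+ (ℕ →₀ K)}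
    {D : Derivation F K K}
    (h : IsDifferentialPolynomialRing D ι t coeff)
    (hker : ∀ x, D x = 0 → x ∈ (algebraMap F K).range) {g : F[X]} (hg : g.Monic)
    (hgD : aeval (D : Module.End F K) g = 0) (hdeg : g.natDegree ≤ finrank F K)
    (hgc : eval₂ (ι.comp (algebraMap F K)) t g ∈ Subring.center R) (z : R) :
    z ∈ Subring.center R ↔
      ∃ q : F[X],
        z = eval₂ (ι.comp (algebraMap F K)) (eval₂ (ι.comp (algebraMap F K)) t g) q := by
  let Ψ := eval₂RingHom' (ι.comp (algebraMap F K)) t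
    fun a => h.commute_ι_t (D.map_algebraMap a)
  have hΨ (f : F[X]) : Ψ f = eval₂ (ι.comp (algebraMap F K)) t f := rfl
  have hΨC : Ψ.comp C = ι.comp (algebraMap F K) := RingHom.ext fun a => eval₂_C _ _
  have hmin := D.minpoly_eq_of_natDegree_le hker hg hgD hdeg
  have hpos : 0 < g.natDegree := by
    refine Nat.pos_of_ne_zero fun h0 => ?_
    rw [hg.natDegree_eq_zero.1 h0, map_one] at hgD
    simpa using LinearMap.congr_fun hgD 1
  constructor
  · intro hz
    obtain ⟨f, rfl⟩ := h.exists_eval₂_eq_of_mem_center hker hz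
    obtain ⟨q, rfl⟩ := exists_eq_comp_of_forall_dvd_sub_C (S := (Subring.center R).comap Ψ)
      hpos (fun a => by
        rw [Subring.mem_comap, hΨ, eval₂_C]
        exact h.ι_mem_center (D.map_algebraMap a))
      (fun f hf => hmin ▸ minpoly.dvd F _ (h.aeval_sub_C_coeff_zero_eq_zero_of_mem_center hf))
      (fun q hq => Subring.mem_center_of_mul_mem_center hgc
        (fun w hw => h.eq_zero_of_mul_eval₂_eq_zero D.map_algebraMap hg.ne_zero hw)
        (by rw [← hΨ, ← map_mul]; exact hq)) hz
    exact ⟨q, by rw [← hΨ, ← hΨ, comp, hom_eval₂, hΨC]⟩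
  · rintro ⟨q, rfl⟩
    rw [eval₂_eq_sum, Polynomial.sum_def]
    exact Subring.sum_mem _ fun k _ =>
      mul_mem (h.ι_mem_center (D.map_algebraMap _)) (pow_mem hgc k)

theorem center_of_differential_polynomial_ring_general
    (p : ℕ) [Fact p.Prime] (F K : Type) [Field F] [Field K] [Algebra F K]
    [CharP F p]
    (e : ℕ) (hdim : Module.finrank F K = p ^ e)
    -- δ is a derivation of K with constants exactly F:
    (δ : K → K)
    (hadd : ∀ a b : K, δ (a + b) = δ a + δ b)
    (hleibniz : ∀ a b : K, δ (a * b) = a * δ b + δ a * b)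
    (hconst : ∀ x : K, δ x = 0 ↔ x ∈ (algebraMap F K).range)
    -- the minimum polynomial g(t) = t^{p^e} + c₁t^{p^{e−1}} + ⋯ + c_e t of δ:
    (c : ℕ → F)
    (hg : ∀ x : K, δ^[p ^ e] x
      + ∑ i ∈ Finset.range e, algebraMap F K (c i) * δ^[p ^ (e - 1 - i)] x = 0)
    -- R = K[t;δ]:
    (R : Type) [Ring R] (ι : K →+* R) (t : R)
    (hmul : ∀ a : K, t * ι a = ι a * t + ι (δ a))
    (coeff : R →+ (ℕ →₀ K))
    (hcoeff : ∀ (a : K) (i : ℕ), coeff (ι a * t ^ i) = Finsupp.single i a)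
    (hrepr : ∀ x : R, (coeff x).sum (fun i a => ι a * t ^ i) = x)
    -- xR = g(t):
    (xR : R) (hxR : xR = t ^ (p ^ e)
      + ∑ i ∈ Finset.range e, ι (algebraMap F K (c i)) * t ^ (p ^ (e - 1 - i))) :
    ∀ z : R, z ∈ Subring.center R ↔
      ∃ q : Polynomial F, z = q.sum fun k a => ι (algebraMap F K a) * xR ^ k := by
  have hF (a : F) : δ (algebraMap F K a) = 0 := (hconst _).2 ⟨a, rfl⟩
  let D : Derivation F K K := Derivation.mk' ⟨⟨δ, hadd⟩, fun a x => by
    simp [Algebra.smul_def, hleibniz, hF]⟩ fun a b => by simp [hleibniz, mul_comm]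
  have hR : IsDifferentialPolynomialRing D ι t coeff := ⟨hmul, hcoeff, hrepr⟩
  have : CharP K p := charP_of_injective_algebraMap (algebraMap F K).injective p
  let g : F[X] := X ^ p ^ e + ∑ i ∈ Finset.range e, C (c i) * X ^ p ^ (e - 1 - i)
  have hlow := degree_sum_C_mul_X_pow_pow_lt (Fact.out : p.Prime).one_lt e c
  have hg_monic : g.Monic := monic_X_pow_add hlow
  have hg_deg : g.natDegree = p ^ e := by
    rw [natDegree_add_eq_left_of_degree_lt (by rwa [degree_X_pow]), natDegree_X_pow]
  have hgD : aeval (D : Module.End F K) g = 0 := by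
    ext y
    simpa [g, D, Module.End.pow_apply, Algebra.smul_def] using hg y
  have hgt : eval₂ (ι.comp (algebraMap F K)) t g = xR := by
    simp [g, hxR, eval₂_finsetSum, C_mul_X_pow_eq_monomial, eval₂_monomial]
  have hxR_center : xR ∈ Subring.center R :=
    hxR ▸ hR.pow_add_sum_mem_center p e _ (fun i => hF (c i)) (fun i => e - 1 - i) hg
  intro z
  rw [hR.mem_center_iff_exists_eval₂ (fun x => (hconst x).1) hg_monic hgD (hg_deg ▸ hdim.ge)
    (hgt ▸ hxR_center), hgt]
  simp only [eval₂_eq_sum, RingHom.comp_apply]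

/-- Let `char F = p`, `K/F` purely inseparable of exponent one, `δ` an algebraic
derivation of `K` with `Const(δ) = F` and minimum polynomial
`g(t) = t^{p^e} + c₁t^{p^{e−1}} + ⋯ + c_e t ∈ F[t]`. Then the center of
`R = K[t;δ]` equals `F[g(t)]`. -/
theorem center_of_differential_polynomial_ring
    (p : ℕ) [Fact p.Prime] (F K : Type) [Field F] [Field K] [Algebra F K]
    [CharP F p]
    -- K/F purely inseparable of exponent one:
    (hinsep : ∀ x : K, x ^ p ∈ (algebraMap F K).range)
    (e : ℕ) (hdim : Module.finrank F K = p ^ e)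
    -- δ is a derivation of K with constants exactly F:
    (δ : K → K)
    (hadd : ∀ a b : K, δ (a + b) = δ a + δ b)
    (hleibniz : ∀ a b : K, δ (a * b) = a * δ b + δ a * b)
    (hconst : ∀ x : K, δ x = 0 ↔ x ∈ (algebraMap F K).range)
    -- the minimum polynomial g(t) = t^{p^e} + c₁t^{p^{e−1}} + ⋯ + c_e t of δ:
    (c : ℕ → F)
    (hg : ∀ x : K, δ^[p ^ e] x
      + ∑ i ∈ Finset.range e, algebraMap F K (c i) * δ^[p ^ (e - 1 - i)] x = 0)
    (hgmin : ∀ e' : ℕ, e' < e → ∀ c' : ℕ → F, ∃ x : K, δ^[p ^ e'] x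
      + ∑ i ∈ Finset.range e', algebraMap F K (c' i) * δ^[p ^ (e' - 1 - i)] x ≠ 0)
    -- R = K[t;δ]:
    (R : Type) [Ring R] (ι : K →+* R) (t : R)
    (hmul : ∀ a : K, t * ι a = ι a * t + ι (δ a))
    (coeff : R →+ (ℕ →₀ K))
    (hcoeff : ∀ (a : K) (i : ℕ), coeff (ι a * t ^ i) = Finsupp.single i a)
    (hrepr : ∀ x : R, (coeff x).sum (fun i a => ι a * t ^ i) = x)
    -- xR = g(t):
    (xR : R) (hxR : xR = t ^ (p ^ e)
      + ∑ i ∈ Finset.range e, ι (algebraMap F K (c i)) * t ^ (p ^ (e - 1 - i))) :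
    ∀ z : R, z ∈ Subring.center R ↔
      ∃ q : Polynomial F, z = q.sum fun k a => ι (algebraMap F K a) * xR ^ k :=
  center_of_differential_polynomial_ring_general p F K e hdim δ hadd hleibniz hconst c hg R ι t hmul
    coeff hcoeff hrepr xR hxR
end

section
/- In the setting R = K[t;δ], δ algebraic with minimum polynomial g of degree p^e and Const(δ) = F: for f(t) = g(t) + a with a ∈ K, the reduced norm is N(f) = (x + a)^{p^e}, where x = g(t). (Note a^{p^e} ∈ F so (x+a)^{p^e} = x^{p^e} + a^{p^e} ∈ F[x].) -/
/-
In the basis `1, t, …, t ^ (p ^ e - 1)` of `K[t;δ]` over `F[x]`, the Leibniz rule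
`t ^ i * a = ∑ⱼ (i choose j) δ^(i - j)(a) t ^ j` shows that `t ^ i * (x + a)` is `(x + a) t ^ i`
plus terms in lower powers of `t`, so the matrix of `x + a` is lower triangular with diagonal
`x + a`. The only subtlety is that this matrix is the one called `ρ`: reading elements of
`K[t;δ]` as polynomials in `t` turns right multiplication by `x = g(t)` into composition with `g`,
and an expansion `∑ⱼ Qⱼ(g) Xʲ` with `j < deg g` is unique because its summands have degrees in
distinct residue classes modulo `deg g`.
-/

open Polynomial Finset

theorem pow_mul_eq_sum_choose_smul_ad_iterate {A : Type*} [Ring A] (t r : A) (n : ℕ) :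
    t ^ n * r = ∑ j ∈ range (n + 1),
      n.choose j • ((fun s => t * s - s * t)^[n - j] r * t ^ j) := by
  -- Left multiplication by `t` is right multiplication by `t` plus `ad t`, and these commute.
  set D : Module.End ℤ A := LinearMap.mulLeft ℤ t - LinearMap.mulRight ℤ t with hD
  have hcomm : Commute (LinearMap.mulRight ℤ t) D :=
    ((LinearMap.commute_mulLeft_right t t).symm).sub_right (Commute.refl _)
  have hD_apply : ⇑D = fun s => t * s - s * t := rfl
  have := congrArg (fun f : Module.End ℤ A => f r) (hcomm.add_pow n)
  simp only [hD, add_sub_cancel, LinearMap.pow_mulLeft, LinearMap.mulLeft_apply,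
    LinearMap.coe_sum, Finset.sum_apply] at this
  rw [this]
  refine Finset.sum_congr rfl fun j _ => ?_
  rw [← hD, Module.End.mul_apply, Module.End.mul_apply, Module.End.natCast_apply, map_nsmul,
    LinearMap.pow_mulRight, LinearMap.mulRight_apply, Module.End.pow_apply, hD_apply,
    smul_mul_assoc]

theorem Polynomial.eq_zero_of_sum_comp_mul_X_pow_eq_zero {K : Type*} [CommRing K] [IsDomain K]
    {q : K[X]} {d : ℕ} (hq : q.natDegree = d) (Q : Fin d → K[X])
    (h : ∑ j, (Q j).comp q * X ^ (j : ℕ) = 0) (j : Fin d) : Q j = 0 := by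
  set f : Fin d → K[X] := fun j => (Q j).comp q * X ^ (j : ℕ)
  have hnatDegree : ∀ j, f j ≠ 0 → (f j).natDegree = j + d * (Q j).natDegree := fun j hj => by
    rw [natDegree_mul_X_pow _ (left_ne_zero_of_mul hj), natDegree_comp, hq, add_comm, mul_comm]
  have hdisj :
      Set.Pairwise {i | i ∈ univ ∧ f i ≠ 0} fun i k => (f i).degree ≠ (f k).degree := by
    rintro i ⟨-, hi⟩ k ⟨-, hk⟩ hik hdeg
    rw [degree_eq_natDegree hi, degree_eq_natDegree hk,
      Nat.cast_inj, hnatDegree i hi, hnatDegree k hk] at hdeg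
    have := congrArg (· % d) hdeg
    simp only [Nat.add_mul_mod_self_left, Nat.mod_eq_of_lt i.isLt, Nat.mod_eq_of_lt k.isLt] at this
    exact hik (Fin.ext this)
  have hfj : f j = 0 := by
    have hsup := degree_sum_eq_of_disjoint f univ hdisj
    rw [h, degree_zero, eq_comm, Finset.sup_eq_bot_iff] at hsup
    exact degree_eq_bot.mp (hsup j (mem_univ j))
  have hq_ne : q ≠ C (q.coeff 0) := fun hC => by
    have := congrArg natDegree hC
    rw [natDegree_C, hq] at this
    exact (Fin.pos j).ne' this
  have hcomp : (Q j).comp q = 0 := (mul_eq_zero.mp hfj).resolve_right (pow_ne_zero _ X_ne_zero)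
  exact (comp_eq_zero_iff.mp hcomp).resolve_right fun h => hq_ne h.2

-- The minimum polynomial `g` of `δ`, so that `x = g(t)`.
noncomputable def linearizedPolynomial {F : Type*} [Semiring F] (p e : ℕ) (c : ℕ → F) :
    F[X] :=
  X ^ p ^ e + ∑ i ∈ range e, C (c i) * X ^ p ^ (e - 1 - i)

theorem natDegree_linearizedPolynomial {F : Type*} [Semiring F] [Nontrivial F] {p : ℕ}
    (hp : 1 < p) (e : ℕ) (c : ℕ → F) : (linearizedPolynomial p e c).natDegree = p ^ e := by
  have hlt : ∀ i ∈ range e, p ^ (e - 1 - i) < p ^ e := fun i hi =>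
    Nat.pow_lt_pow_right hp (by have := mem_range.mp hi; omega)
  rw [linearizedPolynomial, natDegree_add_eq_left_of_degree_lt, natDegree_X_pow]
  rw [degree_X_pow]
  refine (degree_sum_le _ _).trans_lt
    ((Finset.sup_lt_iff (WithBot.bot_lt_coe _)).mpr fun i hi => ?_)
  exact (degree_C_mul_X_pow_le _ _).trans_lt (WithBot.coe_lt_coe.mpr (hlt i hi))

-- Row `i` holds the coordinates over `K[x]` of `t ^ i * (x + a)` in the basis
-- `1, t, …, t ^ (d - 1)`, read off from the Leibniz expansion of `t ^ i * a`.
noncomputable def xAddCMatrix {K : Type*} [Semiring K] (δ : K → K) (a : K) (d : ℕ) :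
    Matrix (Fin d) (Fin d) K[X] :=
  Matrix.of fun i j => (if j = i then X else 0) + C ((i : ℕ).choose j • δ^[i - j] a)

theorem det_xAddCMatrix {K : Type*} [CommRing K] (δ : K → K) (a : K) (d : ℕ) :
    (xAddCMatrix δ a d).det = (X + C a) ^ d := by
  rw [Matrix.det_of_isLowerTriangular]
  · simp [xAddCMatrix]
  · intro i j (hij : i < j)
    simp [xAddCMatrix, hij.ne', Nat.choose_eq_zero_of_lt (Fin.lt_def.mp hij)]

section CoeffPoly

variable {K R : Type*} [Semiring K] [Ring R]

-- `r = ∑ ι aᵢ * t ^ i` is read as the polynomial `∑ aᵢ Xⁱ`.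
noncomputable def coeffPoly (coeff : R →+ (ℕ →₀ K)) : R →+ K[X] :=
  (Finsupp.liftAddHom fun n => (monomial n).toAddMonoidHom).comp coeff

variable {ι : K →+* R} {t : R} {coeff : R →+ (ℕ →₀ K)}

theorem coeffPoly_apply (r : R) : coeffPoly coeff r = (coeff r).sum fun n a => monomial n a :=
  Finsupp.liftAddHom_apply _ _

theorem coeff_coeffPoly (r : R) (n : ℕ) : (coeffPoly coeff r).coeff n = coeff r n := by
  simp [coeffPoly_apply, Finsupp.sum, Polynomial.finsetSum_coeff, coeff_monomial]

theorem coeffPoly_ι_mul_pow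
    (hcoeff : ∀ (a : K) (i : ℕ), coeff (ι a * t ^ i) = Finsupp.single i a) (a : K) (n : ℕ) :
    coeffPoly coeff (ι a * t ^ n) = monomial n a := by
  rw [coeffPoly_apply, hcoeff, Finsupp.sum_single_index (by simp)]

theorem coeffPoly_pow
    (hcoeff : ∀ (a : K) (i : ℕ), coeff (ι a * t ^ i) = Finsupp.single i a) (n : ℕ) :
    coeffPoly coeff (t ^ n) = X ^ n := by
  simpa [← X_pow_eq_monomial] using coeffPoly_ι_mul_pow hcoeff 1 n

theorem coeffPoly_mul_ι_mul_pow
    (hcoeff : ∀ (a : K) (i : ℕ), coeff (ι a * t ^ i) = Finsupp.single i a)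
    (hrepr : ∀ x : R, (coeff x).sum (fun i a => ι a * t ^ i) = x)
    {b : K} (hb : Commute t (ι b)) (r : R) (n : ℕ) :
    coeffPoly coeff (r * (ι b * t ^ n)) = coeffPoly coeff r * monomial n b := by
  conv_lhs => rw [← hrepr r]
  rw [Finsupp.sum_mul, map_finsuppSum, coeffPoly_apply, Finsupp.sum_mul]
  refine Finsupp.sum_congr fun i _ => ?_
  have hswap : ι (coeff r i) * t ^ i * (ι b * t ^ n) = ι (coeff r i * b) * t ^ (i + n) := by
    rw [mul_assoc, ← mul_assoc (t ^ i), (hb.pow_left i).eq, map_mul, pow_add]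
    noncomm_ring
  rw [hswap, coeffPoly_ι_mul_pow hcoeff, monomial_mul_monomial]

theorem commute_of_forall_commute_coeff
    (hrepr : ∀ x : R, (coeff x).sum (fun i a => ι a * t ^ i) = x)
    {s : R} (hs : ∀ n, Commute t (ι (coeff s n))) : Commute t s := by
  rw [← hrepr s]
  exact Commute.sum_right _ _ _ fun n _ => (hs n).mul_right ((Commute.refl t).pow_right n)

theorem coeffPoly_mul_of_commute
    (hcoeff : ∀ (a : K) (i : ℕ), coeff (ι a * t ^ i) = Finsupp.single i a)
    (hrepr : ∀ x : R, (coeff x).sum (fun i a => ι a * t ^ i) = x)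
    {s : R} (hs : ∀ n, Commute t (ι (coeff s n))) (r : R) :
    coeffPoly coeff (r * s) = coeffPoly coeff r * coeffPoly coeff s := by
  conv_lhs => rw [← hrepr s]
  rw [Finsupp.mul_sum, map_finsuppSum, coeffPoly_apply s, Finsupp.mul_sum]
  exact Finsupp.sum_congr fun n _ => coeffPoly_mul_ι_mul_pow hcoeff hrepr (hs n) r n

theorem coeffPoly_mul_pow_of_commute
    (hcoeff : ∀ (a : K) (i : ℕ), coeff (ι a * t ^ i) = Finsupp.single i a)
    (hrepr : ∀ x : R, (coeff x).sum (fun i a => ι a * t ^ i) = x)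
    {s : R} (hs : ∀ n, Commute t (ι (coeff s n))) (r : R) (k : ℕ) :
    coeffPoly coeff (r * s ^ k) = coeffPoly coeff r * coeffPoly coeff s ^ k := by
  induction k with
  | zero => simp
  | succ k ih =>
    rw [pow_succ, ← mul_assoc, coeffPoly_mul_of_commute hcoeff hrepr hs, ih, pow_succ, mul_assoc]

theorem coeffPoly_sum_mul_pow_eq_comp
    (hcoeff : ∀ (a : K) (i : ℕ), coeff (ι a * t ^ i) = Finsupp.single i a)
    (hrepr : ∀ x : R, (coeff x).sum (fun i a => ι a * t ^ i) = x)
    {s : R} (hs : ∀ n, Commute t (ι (coeff s n))) (Q : K[X]) (j : ℕ) :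
    coeffPoly coeff ((Q.sum fun k b => ι b * s ^ k) * t ^ j) =
      Q.comp (coeffPoly coeff s) * X ^ j := by
  have hst : Commute (t ^ j) s := (commute_of_forall_commute_coeff hrepr hs).pow_left j
  rw [Polynomial.comp, eval₂_eq_sum, Polynomial.sum_def, Polynomial.sum_def, Finset.sum_mul,
    Finset.sum_mul, map_sum]
  refine Finset.sum_congr rfl fun k _ => ?_
  rw [mul_assoc, ← (hst.pow_right k).eq, ← mul_assoc,
    coeffPoly_mul_pow_of_commute hcoeff hrepr hs, coeffPoly_ι_mul_pow hcoeff,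
    ← C_mul_X_pow_eq_monomial, mul_assoc, X_pow_mul, ← mul_assoc]

end CoeffPoly

section SkewPolynomial

variable {K R : Type*} [Semiring K] [Ring R] {ι : K →+* R} {δ : K → K} {t : R}
  {coeff : R →+ (ℕ →₀ K)}

theorem pow_mul_ι_eq_sum (hmul : ∀ a : K, t * ι a = ι a * t + ι (δ a)) (n : ℕ) (a : K) :
    t ^ n * ι a = ∑ j ∈ range (n + 1), n.choose j • (ι (δ^[n - j] a) * t ^ j) := by
  have hδ : Function.Semiconj ι δ (fun s => t * s - s * t) := fun b => by
    show ι (δ b) = t * ι b - ι b * t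
    rw [hmul]; abel
  rw [pow_mul_eq_sum_choose_smul_ad_iterate]
  simp only [← (hδ.iterate_right _) a]

theorem coeffPoly_pow_mul_add_ι
    (hcoeff : ∀ (a : K) (i : ℕ), coeff (ι a * t ^ i) = Finsupp.single i a)
    (hrepr : ∀ x : R, (coeff x).sum (fun i a => ι a * t ^ i) = x)
    (hmul : ∀ a : K, t * ι a = ι a * t + ι (δ a))
    {s : R} (hs : ∀ n, Commute t (ι (coeff s n))) (a : K) {d : ℕ} (i : Fin d) :
    coeffPoly coeff (t ^ (i : ℕ) * (s + ι a)) =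
      ∑ j : Fin d, (xAddCMatrix δ a d i j).comp (coeffPoly coeff s) * X ^ (j : ℕ) := by
  have hts : coeffPoly coeff (t ^ (i : ℕ) * s) = coeffPoly coeff s * X ^ (i : ℕ) := by
    rw [coeffPoly_mul_of_commute hcoeff hrepr hs, coeffPoly_pow hcoeff, X_pow_mul]
  have hta : coeffPoly coeff (t ^ (i : ℕ) * ι a) =
      ∑ j ∈ range d, C ((i : ℕ).choose j • δ^[i - j] a) * X ^ j := by
    rw [pow_mul_ι_eq_sum hmul, map_sum, ← sum_subset (range_subset_range.mpr i.isLt)]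
    · refine sum_congr rfl fun j _ => ?_
      rw [map_nsmul, coeffPoly_ι_mul_pow hcoeff, ← C_mul_X_pow_eq_monomial, map_nsmul,
        smul_mul_assoc]
    · intro j _ hj
      rw [Nat.choose_eq_zero_of_lt (by simpa using hj), zero_smul, C_0, zero_mul]
  rw [mul_add, map_add, hts, hta, ← Fin.sum_univ_eq_sum_range (fun j => C _ * X ^ j) d]
  simp only [xAddCMatrix, Matrix.of_apply, add_comp, C_comp, add_mul, sum_add_distrib]
  congr 1
  rw [sum_eq_single_of_mem i (mem_univ i) fun j _ hj => by simp [hj], if_pos rfl, X_comp]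

end SkewPolynomial

theorem det_eq_X_add_C_pow {K R : Type*} [CommRing K] [IsDomain K] [Ring R] {ι : K →+* R}
    {δ : K → K} {t : R} {coeff : R →+ (ℕ →₀ K)}
    (hcoeff : ∀ (a : K) (i : ℕ), coeff (ι a * t ^ i) = Finsupp.single i a)
    (hrepr : ∀ x : R, (coeff x).sum (fun i a => ι a * t ^ i) = x)
    (hmul : ∀ a : K, t * ι a = ι a * t + ι (δ a))
    {s : R} (hs : ∀ n, Commute t (ι (coeff s n)))
    {d : ℕ} (hd : (coeffPoly coeff s).natDegree = d)
    (a : K) (P : Matrix (Fin d) (Fin d) K[X])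
    (hP : ∀ i : Fin d, t ^ (i : ℕ) * (s + ι a) =
      ∑ j : Fin d, ((P i j).sum fun k b => ι b * s ^ k) * t ^ (j : ℕ)) :
    P.det = (X + C a) ^ d := by
  suffices P = xAddCMatrix δ a d by rw [this, det_xAddCMatrix]
  refine Matrix.ext fun i j => ?_
  have h := congrArg (coeffPoly coeff) (hP i)
  rw [coeffPoly_pow_mul_add_ι hcoeff hrepr hmul hs, map_sum] at h
  simp only [coeffPoly_sum_mul_pow_eq_comp hcoeff hrepr hs] at h
  refine sub_eq_zero.mp
    (eq_zero_of_sum_comp_mul_X_pow_eq_zero hd (fun j => P i j - xAddCMatrix δ a d i j) ?_ j)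
  simp only [sub_comp, sub_mul, sum_sub_distrib, h, sub_self]

theorem norm_of_g_plus_constant_general
    (p : ℕ) [Fact p.Prime] (F K : Type) [Field F] [Field K] [Algebra F K]
    (e : ℕ)
    (δ : K → K)
    (hconst : ∀ x : K, δ x = 0 ↔ x ∈ (algebraMap F K).range)
    (c : ℕ → F)
    (R : Type) [Ring R] (ι : K →+* R) (t : R)
    (hmul : ∀ a : K, t * ι a = ι a * t + ι (δ a))
    (coeff : R →+ (ℕ →₀ K))
    (hcoeff : ∀ (a : K) (i : ℕ), coeff (ι a * t ^ i) = Finsupp.single i a)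
    (hrepr : ∀ x : R, (coeff x).sum (fun i a => ι a * t ^ i) = x)
    (xR : R) (hxR : xR = t ^ (p ^ e)
      + ∑ i ∈ Finset.range e, ι (algebraMap F K (c i)) * t ^ (p ^ (e - 1 - i)))
    (ρ : R → Matrix (Fin (p ^ e)) (Fin (p ^ e)) (Polynomial K))
    (hρ : ∀ (g : R) (i : Fin (p ^ e)), t ^ (i : ℕ) * g =
      ∑ j : Fin (p ^ e), ((ρ g i j).sum fun k a => ι a * xR ^ k) * t ^ (j : ℕ))
    (N : R → Polynomial K) (hN : ∀ g : R, N g = (ρ g).det)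
    (a : K) :
    N (xR + ι a) = (Polynomial.X + Polynomial.C a) ^ (p ^ e) := by
  have hx : coeffPoly coeff xR = (linearizedPolynomial p e c).map (algebraMap F K) := by
    simp [hxR, linearizedPolynomial, Polynomial.map_sum, coeffPoly_pow hcoeff,
      coeffPoly_ι_mul_pow hcoeff, C_mul_X_pow_eq_monomial]
  have hcomm : ∀ n, Commute t (ι (coeff xR n)) := by
    intro n
    have hb : coeff xR n ∈ (algebraMap F K).range := by
      rw [← coeff_coeffPoly, hx, coeff_map]; exact ⟨_, rfl⟩
    rw [Commute, SemiconjBy, hmul, (hconst _).mpr hb, map_zero, add_zero]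
  have hdeg : (coeffPoly coeff xR).natDegree = p ^ e := by
    rw [hx, natDegree_map, natDegree_linearizedPolynomial (Fact.out : p.Prime).one_lt]
  rw [hN]
  exact det_eq_X_add_C_pow hcoeff hrepr hmul hcomm hdeg a _ (hρ _)

/-- In `R = K[t;δ]`, `δ` algebraic with minimum polynomial `g` of degree `p^e`
and `Const(δ) = F`: for `f(t) = g(t) + a` with `a ∈ K`, the reduced norm is
`N(f) = (x + a)^{p^e}` where `x = g(t)`. -/
theorem norm_of_g_plus_constant
    (p : ℕ) [Fact p.Prime] (F K : Type) [Field F] [Field K] [Algebra F K]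
    [CharP F p]
    (hinsep : ∀ x : K, x ^ p ∈ (algebraMap F K).range)
    (e : ℕ) (hdim : Module.finrank F K = p ^ e)
    (δ : K → K)
    (hadd : ∀ a b : K, δ (a + b) = δ a + δ b)
    (hleibniz : ∀ a b : K, δ (a * b) = a * δ b + δ a * b)
    (hconst : ∀ x : K, δ x = 0 ↔ x ∈ (algebraMap F K).range)
    (c : ℕ → F)
    (hg : ∀ x : K, δ^[p ^ e] x
      + ∑ i ∈ Finset.range e, algebraMap F K (c i) * δ^[p ^ (e - 1 - i)] x = 0)
    (R : Type) [Ring R] (ι : K →+* R) (t : R)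
    (hmul : ∀ a : K, t * ι a = ι a * t + ι (δ a))
    (coeff : R →+ (ℕ →₀ K))
    (hcoeff : ∀ (a : K) (i : ℕ), coeff (ι a * t ^ i) = Finsupp.single i a)
    (hrepr : ∀ x : R, (coeff x).sum (fun i a => ι a * t ^ i) = x)
    (xR : R) (hxR : xR = t ^ (p ^ e)
      + ∑ i ∈ Finset.range e, ι (algebraMap F K (c i)) * t ^ (p ^ (e - 1 - i)))
    (ρ : R → Matrix (Fin (p ^ e)) (Fin (p ^ e)) (Polynomial K))
    (hρ : ∀ (g : R) (i : Fin (p ^ e)), t ^ (i : ℕ) * g =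
      ∑ j : Fin (p ^ e), ((ρ g i j).sum fun k a => ι a * xR ^ k) * t ^ (j : ℕ))
    (N : R → Polynomial K) (hN : ∀ g : R, N g = (ρ g).det)
    (a : K) :
    N (xR + ι a) = (Polynomial.X + Polynomial.C a) ^ (p ^ e) :=
  norm_of_g_plus_constant_general p F K e δ hconst c R ι t hmul coeff hcoeff hrepr xR hxR ρ hρ N hN
    a
end
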